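/- arXiv:1902.05050 — 2 statements merged into one kernel-verified Lean document; each statement's English description precedes it below -/
import Mathlib

section
/- Delay structure of the fluid solution (Lemma 1, property 2). Let α be a DDE initial condition with associated fluid solution (a,b). Then b(t) = h + a(t − h) for all t ≥ 2h. -/
open MeasureTheory Set

noncomputable section

/-- `α = (a_h, u)` is a DDE initial condition: `a_h > 0` and `u : [0,h] → ℝ` is
integrable with `0 ≤ u(t) ≤ 2`. -/
def IsDDEInit (h ah : ℝ) (u : ℝ → ℝ) : Prop :=
  0 < ah ∧ MeasureTheory.IntegrableOn u (Set.Icc 0 h) ∧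
    ∀ t ∈ Set.Icc (0:ℝ) h, 0 ≤ u t ∧ u t ≤ 2

/-- `(a, b)` is the fluid solution associated to the DDE initial condition `(a_h, u)`:
`b(t) = a_h + t - h + ∫_{t-h}^h u(s) ds` on `[h, 2h]`, `a` solves `a′ = 1 - 2a/b` on `[h, 2h]`
with `a(h) = a_h`, and for `t > 2h` the pair satisfies the delay differential equations
`a′(t) = 1 - 2a(t)/b(t)` and `b′(t) = 1 - 2a(t-h)/b(t-h)`. -/
def IsFluidSolution (h ah : ℝ) (u : ℝ → ℝ) (a b : ℝ → ℝ) : Prop :=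
  ContinuousOn a (Set.Ici h) ∧ ContinuousOn b (Set.Ici h) ∧
  (∀ t ∈ Set.Icc h (2*h), b t = ah + t - h + ∫ s in (t-h)..h, u s) ∧
  a h = ah ∧
  (∀ t ∈ Set.Ioc h (2*h), HasDerivWithinAt a (1 - 2 * a t / b t) (Set.Icc h (2*h)) t) ∧
  (∀ t, 2*h < t → HasDerivAt a (1 - 2 * a t / b t) t ∧
    HasDerivAt b (1 - 2 * a (t - h) / b (t - h)) t)

/-!
On `[2h, 3h]` and on `[3h, ∞)` both `b(t)` and `a(t - h)` have derivative
`1 - 2a(t - h)/b(t - h)`, so `b(t) - a(t - h)` is constant on `[2h, ∞)`; at `t = 2h` it equals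
`b(2h) - a(h) = (a_h + h) - a_h = h`.
-/

theorem eq_of_hasDerivAt_zero {f : ℝ → ℝ} {a b : ℝ} (hab : a ≤ b)
    (hf : ContinuousOn f (Icc a b)) (hf' : ∀ x ∈ Ioo a b, HasDerivAt f 0 x) : f b = f a := by
  rcases hab.eq_or_lt with rfl | hlt
  · rfl
  obtain ⟨c, _, hc⟩ := exists_hasDerivAt_eq_slope f (fun _ => 0) hlt hf hf'
  have : f b - f a = 0 := by
    simpa [sub_ne_zero.2 hlt.ne', eq_comm] using hc
  linarith

/-- The exceptional point `p` is harmless because `f` is continuous there. -/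
theorem eq_of_hasDerivAt_zero_of_ne {f : ℝ → ℝ} {a b p : ℝ} (hab : a ≤ b)
    (hf : ContinuousOn f (Icc a b)) (hf' : ∀ x ∈ Ioo a b, x ≠ p → HasDerivAt f 0 x) :
    f b = f a := by
  by_cases hp : p ∈ Ioo a b
  · calc f b = f p :=
          eq_of_hasDerivAt_zero hp.2.le (hf.mono (Icc_subset_Icc_left hp.1.le))
            fun x hx => hf' x ⟨hp.1.trans hx.1, hx.2⟩ hx.1.ne'
      _ = f a :=
          eq_of_hasDerivAt_zero hp.1.le (hf.mono (Icc_subset_Icc_right hp.2.le))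
            fun x hx => hf' x ⟨hx.1, hx.2.trans hp.2⟩ hx.2.ne
  · exact eq_of_hasDerivAt_zero hab hf fun x hx => hf' x hx fun hxp => hp (hxp ▸ hx)

namespace IsFluidSolution

variable {h ah : ℝ} {u a b : ℝ → ℝ}

theorem b_two_mul_eq (hf : IsFluidSolution h ah u a b) (hh : 0 ≤ h) : b (2 * h) = ah + h := by
  obtain ⟨-, -, hb_init, -⟩ := hf
  have hb := hb_init (2 * h) ⟨by linarith, le_rfl⟩
  rw [show 2 * h - h = h by ring, intervalIntegral.integral_same] at hb
  linarith

/-- At `s = 2h` only the one-sided derivative from the left is available. -/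
theorem hasDerivAt_a (hf : IsFluidSolution h ah u a b) {s : ℝ} (hs : h < s) (hs' : s ≠ 2 * h) :
    HasDerivAt a (1 - 2 * a s / b s) s := by
  obtain ⟨-, -, -, -, ha_init, hdde⟩ := hf
  rcases hs'.lt_or_gt with hlt | hgt
  · exact (ha_init s ⟨hs, hlt.le⟩).hasDerivAt (Icc_mem_nhds hs hlt)
  · exact (hdde s hgt).1

theorem hasDerivAt_sub_delay (hf : IsFluidSolution h ah u a b) {t : ℝ} (ht : 2 * h < t)
    (ht' : t ≠ 3 * h) : HasDerivAt (fun t => b t - a (t - h)) 0 t := by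
  have ha := (hf.hasDerivAt_a (s := t - h) (by linarith)
    fun heq => ht' (by linarith)).comp_sub_const t h
  have hb := (hf.2.2.2.2.2 t ht).2
  exact (hb.sub ha).congr_deriv (sub_self _)

theorem continuousOn_sub_delay (hf : IsFluidSolution h ah u a b) (hh : 0 ≤ h) :
    ContinuousOn (fun t => b t - a (t - h)) (Ici (2 * h)) := by
  obtain ⟨ha_cont, hb_cont, -⟩ := hf
  refine (hb_cont.mono fun t (ht : 2 * h ≤ t) => ?_).sub
    (ha_cont.comp (continuousOn_id.sub continuousOn_const) fun t (ht : 2 * h ≤ t) => ?_)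
  · exact show h ≤ t by linarith
  · exact show h ≤ t - h by linarith

end IsFluidSolution

theorem fluid_solution_delay_structure_general
    (h ah : ℝ) (u : ℝ → ℝ) (hh : 0 < h)
    (a b : ℝ → ℝ) (hfluid : IsFluidSolution h ah u a b) :
    ∀ t : ℝ, 2*h ≤ t → b t = h + a (t - h) := by
  intro t ht
  have hconst : b t - a (t - h) = b (2 * h) - a (2 * h - h) :=
    eq_of_hasDerivAt_zero_of_ne ht
      ((hfluid.continuousOn_sub_delay hh.le).mono Icc_subset_Ici_self)
      fun x hx hx3 => hfluid.hasDerivAt_sub_delay hx.1 hx3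
  rw [hfluid.b_two_mul_eq hh.le, show 2 * h - h = h by ring, hfluid.2.2.2.1] at hconst
  linarith

/-- **Lemma 1, property 2 (delay structure of the fluid solution).**
If `(a, b)` is the fluid solution associated to a DDE initial condition, then
`b(t) = h + a(t - h)` for all `t ≥ 2h`. -/
theorem fluid_solution_delay_structure
    (h ah : ℝ) (u : ℝ → ℝ) (hh : 0 < h) (hα : IsDDEInit h ah u)
    (a b : ℝ → ℝ) (hfluid : IsFluidSolution h ah u a b) :
    ∀ t : ℝ, 2*h ≤ t → b t = h + a (t - h) :=
  fluid_solution_delay_structure_general h ah u hh a b hfluid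
end
end

section
/- Contraction at the endpoint for the one-step delay map (inequality (pf2:10)). Fix h > 0, let x : [0,h] → ℝ be continuous with x(t) + h > 0 for all t ∈ [0,h], and let y : [0,h] → ℝ be the solution of y′(t) = (x(t) − 2y(t))/(2(x(t) + h)) with y(0) = x(h). Then |y(h)| ≤ κ(‖x‖) · ‖x‖, where κ(r) = max{ 3/4, exp(−h/(3(r + h))) }. -/
/-! While `y > ‖x‖/2`, the right-hand side of the equation is at most `(‖x‖/2 - y)/(‖x‖ + h)`,
because `x ≤ ‖x‖` makes the numerator negative and `0 < x + h ≤ ‖x‖ + h`; the same holds for `-y`.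
Comparing with the relaxation `u' = (c - u)/τ` therefore gives
`|y(h)| ≤ ‖x‖ (1 + s³)/2` with `s = exp(-h/(3(‖x‖ + h)))`, and `(1 + s³)/2 ≤ max(3/4, s)`
for every `s ≤ 1`. -/

open Set

theorem Real.le_biSup_of_bddAbove_image {α : Type*} {f : α → ℝ} {s : Set α} {a : α}
    (hf : BddAbove (f '' s)) (ha : a ∈ s) : f a ≤ ⨆ i ∈ s, f i := by
  obtain ⟨C, hC⟩ := hf
  refine le_ciSup_of_le ⟨max C 0, ?_⟩ a (ciSup_pos (f := fun _ => f a) ha).ge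
  rintro _ ⟨i, rfl⟩
  by_cases hi : i ∈ s
  · simpa [ciSup_pos hi] using Or.inl (hC (mem_image_of_mem f hi))
  · simp [hi]

theorem div_le_div_of_le_of_nonpos {n m d d' : ℝ} (hn : n ≤ m) (hm : m ≤ 0) (hd : 0 < d)
    (hdd : d ≤ d') : n / d ≤ m / d' :=
  calc n / d ≤ m / d := div_le_div_of_nonneg_right hn hd.le
    _ ≤ m / d' := by
      simpa only [neg_div, neg_le_neg_iff] using div_le_div_of_nonneg_left (neg_nonneg.2 hm) hd hdd

theorem image_le_add_mul_exp_of_deriv_le {f f' : ℝ → ℝ} {a b c D τ : ℝ} (hD : 0 ≤ D)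
    (hτ : 0 < τ) (hf : ∀ t ∈ Icc a b, HasDerivWithinAt f (f' t) (Icc a b) t)
    (ha : f a ≤ c + D) (bound : ∀ t ∈ Ico a b, c < f t → f' t ≤ (c - f t) / τ) :
    ∀ ⦃t⦄, t ∈ Icc a b → f t ≤ c + D * Real.exp (-(t - a) / τ) := by
  intro t ht
  have hta : 0 ≤ t - a := sub_nonneg.2 ht.1
  refine le_of_forall_pos_le_add fun ε hε => ?_
  set δ := ε / (1 + (t - a))
  have hδ : 0 < δ := by positivity
  set E : ℝ → ℝ := fun s => D * Real.exp (-(s - a) / τ)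
  have hE : ∀ s, HasDerivAt E (-E s / τ) s := fun s =>
    ((((hasDerivAt_id s).sub_const a).neg.div_const τ).exp.const_mul D).congr_deriv
      (by simp only [E, id, Pi.neg_apply]; ring)
  -- the fence `c + E + δ (1 + (s - a))` stays strictly above `c`, where `bound` applies
  have hB : ∀ s, HasDerivAt (fun s => c + E s + δ * (1 + (s - a))) (-E s / τ + δ) s :=
    fun s => (((hE s).const_add c).add
      ((((hasDerivAt_id s).sub_const a).const_add 1).const_mul δ)).congr_deriv (by simp)
  have fence := image_le_of_deriv_right_lt_deriv_boundary
    (fun s hs => (hf s hs).continuousWithinAt)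
    (fun s hs => (hf s (Ico_subset_Icc_self hs)).mono_of_mem_nhdsWithin (Icc_mem_nhdsGE_of_mem hs))
    (by simp [E]; linarith) hB ?_ ht
  · calc f t ≤ c + E t + δ * (1 + (t - a)) := fence
      _ = c + E t + ε := by rw [div_mul_cancel₀ _ (by positivity)]
  · intro s hs hfs
    have hsa : 0 ≤ s - a := sub_nonneg.2 hs.1
    have hEs : 0 ≤ E s := by positivity
    have hδs : 0 < δ * (1 + (s - a)) := by positivity
    calc f' s ≤ (c - f s) / τ := bound s hs (by rw [hfs]; linarith)
      _ ≤ -E s / τ := by rw [hfs]; gcongr; nlinarith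
      _ < -E s / τ + δ := lt_add_of_pos_right _ hδ

theorem one_add_pow_three_div_two_le_max {s : ℝ} (hs : s ≤ 1) :
    (1 + s ^ 3) / 2 ≤ max (3 / 4) s := by
  rcases le_or_gt (s ^ 3) (1 / 2) with hsmall | hlarge
  · exact le_max_of_le_left (by linarith)
  · have hs0 : 0 < s := (Odd.pow_pos_iff (n := 3) (by decide)).1 (by linarith)
    -- `2s - 1 - s³ = (1 - s)(s² + s - 1)`, and `s² + s > 1` once `s³ > 1/2`
    refine le_max_of_le_right ?_
    nlinarith [mul_nonneg (sub_nonneg.2 hs) hs0.le, mul_nonneg (sub_nonneg.2 hs) (sq_nonneg s)]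

theorem half_add_half_mul_exp_le_max_mul {M h : ℝ} (hM : 0 ≤ M) (hh : 0 < h) :
    M / 2 + M / 2 * Real.exp (-h / (M + h)) ≤ max (3 / 4) (Real.exp (-h / (3 * (M + h)))) * M := by
  set s := Real.exp (-h / (3 * (M + h)))
  have hcube : Real.exp (-h / (M + h)) = s ^ 3 := by
    rw [← Real.exp_nat_mul]
    congr 1
    push_cast
    field_simp
  have hs : s ≤ 1 :=
    Real.exp_le_one_iff.2 (div_nonpos_of_nonpos_of_nonneg (by linarith) (by positivity))
  calc M / 2 + M / 2 * Real.exp (-h / (M + h)) = (1 + s ^ 3) / 2 * M := by rw [hcube]; ring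
    _ ≤ max (3 / 4) s * M := mul_le_mul_of_nonneg_right (one_add_pow_three_div_two_le_max hs) hM

/-- **Contraction at the endpoint for the one-step delay map (inequality (pf2:10)).**
Fix `h > 0`, let `x : [0,h] → ℝ` be continuous with `x(t) + h > 0`, and let `y` solve
`y′ = (x - 2y)/(2(x + h))` on `[0,h]` with `y(0) = x(h)`. Then
`|y(h)| ≤ κ(‖x‖) ‖x‖` where `κ(r) = max(3/4, exp(-h/(3(r+h))))`. -/
theorem delay_map_endpoint_contraction
    (h : ℝ) (hh : 0 < h) (x y : ℝ → ℝ)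
    (hxc : ContinuousOn x (Set.Icc 0 h))
    (hxpos : ∀ t ∈ Set.Icc (0:ℝ) h, 0 < x t + h)
    (hy0 : y 0 = x h)
    (hyode : ∀ t ∈ Set.Icc (0:ℝ) h,
      HasDerivWithinAt y ((x t - 2 * y t) / (2 * (x t + h))) (Set.Icc 0 h) t)
    (κ : ℝ → ℝ) (hκ : ∀ r, κ r = max (3/4) (Real.exp (-h / (3*(r + h))))) :
    |y h| ≤ κ (⨆ s ∈ Set.Icc (0:ℝ) h, |x s|) * ⨆ s ∈ Set.Icc (0:ℝ) h, |x s| := by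
  set M := ⨆ s ∈ Icc (0:ℝ) h, |x s|
  have hxM : ∀ t ∈ Icc 0 h, |x t| ≤ M := fun t ht =>
    Real.le_biSup_of_bddAbove_image (isCompact_Icc.bddAbove_image hxc.abs) ht
  have hend : h ∈ Icc 0 h := right_mem_Icc.2 hh.le
  have hM : 0 ≤ M := (abs_nonneg _).trans (hxM h hend)
  have hMh : 0 < M + h := by linarith
  have relax : ∀ {f f' : ℝ → ℝ}, (∀ t ∈ Icc 0 h, HasDerivWithinAt f (f' t) (Icc 0 h) t) →
      f 0 ≤ M → (∀ t ∈ Icc 0 h, M / 2 < f t → f' t ≤ (M / 2 - f t) / (M + h)) →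
      f h ≤ M / 2 + M / 2 * Real.exp (-h / (M + h)) := fun hf h0 bound => by
    simpa using image_le_add_mul_exp_of_deriv_le (by positivity) (by linarith) hf
      (by linarith) (fun t ht => bound t (Ico_subset_Icc_self ht)) hend
  have hup := relax hyode (hy0 ▸ (le_abs_self _).trans (hxM h hend)) fun t ht hyt =>
    calc (x t - 2 * y t) / (2 * (x t + h)) ≤ (M - 2 * y t) / (2 * (M + h)) :=
          div_le_div_of_le_of_nonpos (by linarith [le_abs_self (x t), hxM t ht]) (by linarith)
            (by linarith [hxpos t ht]) (by linarith [le_abs_self (x t), hxM t ht])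
      _ = (M / 2 - y t) / (M + h) := by field_simp
  have hlow := relax (f := fun t => -y t) (fun t ht => (hyode t ht).neg)
    (hy0 ▸ (neg_le_abs _).trans (hxM h hend)) fun t ht hyt =>
    calc -((x t - 2 * y t) / (2 * (x t + h))) = (2 * y t - x t) / (2 * (x t + h)) := by ring
      _ ≤ (M + 2 * y t) / (2 * (M + h)) :=
          div_le_div_of_le_of_nonpos (by linarith [neg_abs_le (x t), hxM t ht]) (by linarith)
            (by linarith [hxpos t ht]) (by linarith [le_abs_self (x t), hxM t ht])
      _ = (M / 2 - -y t) / (M + h) := by field_simp; ring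
  rw [hκ]
  exact (abs_le.2 ⟨by linarith, hup⟩).trans (half_add_half_mul_exp_le_max_mul hM hh)
end
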